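/- arXiv:2305.19777 — 4 statements merged into one kernel-verified Lean document; each statement's English description precedes it below -/
import Mathlib

section
/- For every sufficiently large prime p and every integer q ≥ 1, there exist n ∈ ℕ and a vector σ ∈ {2,3}^{n−1} such that ∑_{i} |σᵢ|_p^q = p^q − 1, and for every integer k with k ≢ 0, 1, −1 (mod p), one has ∑_i |k·σᵢ|_p^q > p^q − 1, where |a|_p = min_{z∈ℤ} |a − pz|. -/
noncomputable def modAbs (m x : ℝ) : ℝ := sInf (Set.range fun z : ℤ => |x - m * z|)

def modNat (p : ℕ) (a : ℤ) : ℕ := min (a % (p:ℤ)).toNat (p - (a % (p:ℤ)).toNat)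

lemma modNat_le_abs {p : ℕ} (hp : 0 < p) {c w : ℤ} (h : (p:ℤ) ∣ c - w) :
    (modNat p c : ℤ) ≤ |w| := by
  have hp' : (0:ℤ) < p := by exact_mod_cast hp
  have h1 : 0 ≤ c % (p:ℤ) := Int.emod_nonneg c hp'.ne'
  have h2 : c % (p:ℤ) < p := Int.emod_lt_of_pos c hp'
  have hw : w % (p:ℤ) = c % (p:ℤ) := (Int.modEq_iff_dvd.mpr h : w ≡ c [ZMOD (p:ℤ)])
  have hdm : (p:ℤ) * (w / p) + w % p = w := Int.mul_ediv_add_emod w p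
  have hcast : (modNat p c : ℤ) = min (c % p) (p - c % p) := by
    unfold modNat
    push_cast [Int.toNat_of_nonneg h1]
    omega
  rw [hcast]
  rcases le_or_gt 0 (w / (p:ℤ)) with hd | hd
  · have hrw : c % (p:ℤ) ≤ w := by nlinarith
    calc min (c % (p:ℤ)) (p - c % p) ≤ c % p := min_le_left _ _
      _ ≤ w := hrw
      _ ≤ |w| := le_abs_self w
  · have hd1 : w / (p:ℤ) ≤ -1 := by omega
    have hpd : (p:ℤ) * (w / p) ≤ -p := by nlinarith
    have hrw : (p:ℤ) - c % p ≤ -w := by omega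
    calc min (c % (p:ℤ)) (p - c % p) ≤ p - c % p := min_le_right _ _
      _ ≤ -w := hrw
      _ ≤ |w| := neg_le_abs w

lemma modNat_resid {p : ℕ} (hp : 0 < p) (c : ℤ) :
    ∃ e : ℤ, (e = 1 ∨ e = -1) ∧ (p:ℤ) ∣ c - e * modNat p c := by
  have hp' : (0:ℤ) < p := by exact_mod_cast hp
  have h1 : 0 ≤ c % (p:ℤ) := Int.emod_nonneg c hp'.ne'
  have h2 : c % (p:ℤ) < p := Int.emod_lt_of_pos c hp'
  have hd : (p:ℤ) ∣ c - c % p := by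
    have := Int.mul_ediv_add_emod c p
    exact ⟨c / p, by omega⟩
  rcases le_or_gt ((c % (p:ℤ)).toNat) (p - (c % (p:ℤ)).toNat) with hm | hm
  · refine ⟨1, Or.inl rfl, ?_⟩
    have : (modNat p c : ℤ) = c % p := by
      unfold modNat; rw [min_eq_left hm]; omega
    rw [one_mul, this]; exact hd
  · refine ⟨-1, Or.inr rfl, ?_⟩
    have : (modNat p c : ℤ) = p - c % p := by
      unfold modNat; rw [min_eq_right (le_of_lt hm)]; push_cast; omega
    rw [this]
    have : c - -1 * ((p:ℤ) - c % p) = (c - c % p) + p := by ring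
    rw [this]
    exact dvd_add hd (dvd_refl _)

lemma two_mul_modNat_le {p : ℕ} (hp : 0 < p) (c : ℤ) : 2 * modNat p c ≤ p := by
  have hp' : (0:ℤ) < p := by exact_mod_cast hp
  have h1 : 0 ≤ c % (p:ℤ) := Int.emod_nonneg c hp'.ne'
  have h2 : c % (p:ℤ) < p := Int.emod_lt_of_pos c hp'
  unfold modNat
  omega

lemma modNat_eq_zero {p : ℕ} (hp : 0 < p) {c : ℤ} (h : modNat p c = 0) : (p:ℤ) ∣ c := by
  have hp' : (0:ℤ) < p := by exact_mod_cast hp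
  have h1 : 0 ≤ c % (p:ℤ) := Int.emod_nonneg c hp'.ne'
  have h2 : c % (p:ℤ) < p := Int.emod_lt_of_pos c hp'
  unfold modNat at h
  have : c % (p:ℤ) = 0 := by omega
  exact Int.dvd_of_emod_eq_zero this

lemma modNat_small {p : ℕ} (hp : 0 < p) {a : ℕ} (h : 2 * a ≤ p) : modNat p (a : ℤ) = a := by
  have hp' : (0:ℤ) < p := by exact_mod_cast hp
  have hmod : (a : ℤ) % p = a := Int.emod_eq_of_lt (by positivity) (by exact_mod_cast (by omega : a < p))
  unfold modNat
  rw [hmod]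
  omega

lemma modAbs_intCast {p : ℕ} (hp : 0 < p) (a : ℤ) :
    modAbs p ((a : ℤ) : ℝ) = (modNat p a : ℝ) := by
  have hp' : (0:ℤ) < p := by exact_mod_cast hp
  have h1 : 0 ≤ a % (p:ℤ) := Int.emod_nonneg a hp'.ne'
  have h2 : a % (p:ℤ) < p := Int.emod_lt_of_pos a hp'
  have hbdd : BddBelow (Set.range fun z : ℤ => |(a:ℝ) - p * z|) := by
    refine ⟨0, ?_⟩; rintro x ⟨z, rfl⟩; positivity
  have hne : (Set.range fun z : ℤ => |(a:ℝ) - p * z|).Nonempty := ⟨_, ⟨0, rfl⟩⟩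
  have hmem : ∀ w : ℤ, (p:ℤ) ∣ a - w →
      ((w.natAbs : ℕ) : ℝ) ∈ Set.range fun z : ℤ => |(a:ℝ) - p * z| := by
    intro w hw
    obtain ⟨z, hz⟩ := hw
    refine ⟨z, ?_⟩
    have hw' : w = a - (p:ℤ) * z := by linarith
    have h3 : ((w:ℤ):ℝ) = (a:ℝ) - p * z := by rw [hw']; push_cast; ring
    show |(a:ℝ) - p * z| = ((w.natAbs : ℕ) : ℝ)
    rw [← h3]
    rw [Nat.cast_natAbs, Int.cast_abs]
  apply le_antisymm
  · rcases modNat_resid hp a with ⟨e, he, hdvd⟩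
    have hna : (e * (modNat p a : ℤ)).natAbs = modNat p a := by
      rcases he with rfl | rfl <;> simp
    have := hmem _ hdvd
    rw [hna] at this
    exact csInf_le hbdd this
  · apply le_csInf hne
    rintro x ⟨z, rfl⟩
    have hdv : (p:ℤ) ∣ a - (a - p * z) := ⟨z, by ring⟩
    have hle := modNat_le_abs hp hdv
    have : ((|a - p * z| : ℤ) : ℝ) = |(a:ℝ) - p * z| := by push_cast [Int.cast_abs]; ring_nf
    calc (modNat p a : ℝ) ≤ ((|a - (p:ℤ) * z| : ℤ) : ℝ) := by exact_mod_cast hle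
      _ = |(a:ℝ) - p * z| := this

lemma key_cases {p : ℕ} (hp : 100 ≤ p) {k : ℤ}
    (h0 : ¬ (p:ℤ) ∣ k) (h1 : ¬ (p:ℤ) ∣ k - 1) (h2 : ¬ (p:ℤ) ∣ k + 1) :
    (4 ≤ modNat p (2*k) ∧ 6 ≤ modNat p (3*k)) ∨
      p ≤ 3 * modNat p (3*k) ∨ p ≤ 4 * modNat p (2*k) := by
  have hp0 : 0 < p := by omega
  obtain ⟨d, hd, hdk⟩ := modNat_resid hp0 k
  obtain ⟨e2, he2, hdk2⟩ := modNat_resid hp0 (2*k)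
  obtain ⟨e3, he3, hdk3⟩ := modNat_resid hp0 (3*k)
  have h2r : 2 * modNat p k ≤ p := two_mul_modNat_le hp0 k
  have hr2 : 2 ≤ modNat p k := by
    by_contra hcon
    push_neg at hcon
    interval_cases hmn : (modNat p k)
    · exact h0 (modNat_eq_zero hp0 hmn)
    · rcases hd with rfl | rfl
      · exact h1 (by simpa using hdk)
      · refine h2 ?_
        have heq : k + 1 = k - -1 * ((1:ℕ):ℤ) := by push_cast; ring
        rw [heq]; exact hdk
  set r := modNat p k with hr
  set s := modNat p (2*k) with hs
  set t := modNat p (3*k) with ht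
  have htri : (r:ℤ) ≤ s + t := by
    have hdvd : (p:ℤ) ∣ k - (e3 * t - e2 * s) := by
      have heq : k - (e3 * (t:ℤ) - e2 * s) = (3*k - e3*t) - (2*k - e2*s) := by ring
      rw [heq]; exact dvd_sub hdk3 hdk2
    have hle := modNat_le_abs hp0 hdvd
    have habs : |e3 * (t:ℤ) - e2 * s| ≤ (t:ℤ) + s := by
      have hts : (0:ℤ) ≤ t := by positivity
      have hss : (0:ℤ) ≤ s := by positivity
      rcases he3 with rfl | rfl <;> rcases he2 with rfl | rfl <;>
        rw [abs_le] <;> constructor <;> linarith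
    calc (r:ℤ) ≤ |e3 * (t:ℤ) - e2 * s| := hle
      _ ≤ t + s := habs
      _ = s + t := by ring
  have hp' : (100:ℤ) ≤ p := by exact_mod_cast hp
  have hp0' : (0:ℤ) ≤ p := by positivity
  have h2r' : 2 * (r:ℤ) ≤ p := by exact_mod_cast h2r
  have hr2' : (2:ℤ) ≤ r := by exact_mod_cast hr2
  by_cases hscase : 4 ≤ s
  · by_cases htcase : 6 ≤ t
    · exact Or.inl ⟨hscase, htcase⟩
    · -- t ≤ 5 : show p ≤ 4 * s
      have ht5 : (t:ℤ) ≤ 5 := by exact_mod_cast (by omega : t ≤ 5)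
      have ht0 : (0:ℤ) ≤ t := by positivity
      have hs0 : (0:ℤ) ≤ s := by positivity
      have hdvd : (p:ℤ) ∣ 3 * r - d * e3 * t := by
        have hdd : (p:ℤ) ∣ (3*k - e3*(t:ℤ)) - 3*(k - d*r) :=
          dvd_sub hdk3 (Dvd.dvd.mul_left hdk 3)
        have hdd2 : (p:ℤ) ∣ d * ((3*k - e3*(t:ℤ)) - 3*(k - d*r)) := hdd.mul_left d
        have heq : d * ((3*k - e3*(t:ℤ)) - 3*(k - d*r)) = 3*r - d*e3*t := by
          rcases hd with rfl | rfl <;> ring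
        rwa [heq] at hdd2
      obtain ⟨m, hm⟩ := hdvd
      have hucases : d * e3 * (t:ℤ) = t ∨ d * e3 * (t:ℤ) = -t := by
        rcases hd with rfl | rfl <;> rcases he3 with rfl | rfl
        · left; ring
        · right; ring
        · right; ring
        · left; ring
      have hu1 : -5 ≤ d * e3 * (t:ℤ) := by rcases hucases with h | h <;> rw [h] <;> linarith
      have hu2 : d * e3 * (t:ℤ) ≤ 5 := by rcases hucases with h | h <;> rw [h] <;> linarith
      have hmle : m = 0 ∨ m = 1 := by
        rcases lt_trichotomy m 0 with hmm | hmm | hmm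
        · have hle1 : m ≤ -1 := by omega
          have : (p:ℤ) * m ≤ p * (-1) := mul_le_mul_of_nonneg_left hle1 hp0'
          exfalso; linarith
        · exact Or.inl hmm
        · rcases (by omega : m = 1 ∨ 2 ≤ m) with h' | h'
          · exact Or.inr h'
          · have : (p:ℤ) * 2 ≤ p * m := mul_le_mul_of_nonneg_left h' hp0'
            exfalso; linarith
      rcases hmle with rfl | rfl
      · exfalso; rw [mul_zero] at hm; linarith
      · right; right
        rw [mul_one] at hm
        have hfin : (p:ℤ) ≤ 4 * s := by linarith
        exact_mod_cast hfin
  · -- s ≤ 3 : show p ≤ 3 * t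
    have hs3 : (s:ℤ) ≤ 3 := by exact_mod_cast (by omega : s ≤ 3)
    have hs0 : (0:ℤ) ≤ s := by positivity
    have ht0 : (0:ℤ) ≤ t := by positivity
    have hdvd : (p:ℤ) ∣ 2 * r - d * e2 * s := by
      have hdd : (p:ℤ) ∣ (2*k - e2*(s:ℤ)) - 2*(k - d*r) :=
        dvd_sub hdk2 (Dvd.dvd.mul_left hdk 2)
      have hdd2 : (p:ℤ) ∣ d * ((2*k - e2*(s:ℤ)) - 2*(k - d*r)) := hdd.mul_left d
      have heq : d * ((2*k - e2*(s:ℤ)) - 2*(k - d*r)) = 2*r - d*e2*s := by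
        rcases hd with rfl | rfl <;> ring
      rwa [heq] at hdd2
    obtain ⟨m, hm⟩ := hdvd
    have hucases : d * e2 * (s:ℤ) = s ∨ d * e2 * (s:ℤ) = -s := by
      rcases hd with rfl | rfl <;> rcases he2 with rfl | rfl
      · left; ring
      · right; ring
      · right; ring
      · left; ring
    have hu1 : -3 ≤ d * e2 * (s:ℤ) := by rcases hucases with h | h <;> rw [h] <;> linarith
    have hu2 : d * e2 * (s:ℤ) ≤ 3 := by rcases hucases with h | h <;> rw [h] <;> linarith
    have hmle : m = 0 ∨ m = 1 := by
      rcases lt_trichotomy m 0 with hmm | hmm | hmm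
      · have hle1 : m ≤ -1 := by omega
        have : (p:ℤ) * m ≤ p * (-1) := mul_le_mul_of_nonneg_left hle1 hp0'
        exfalso; linarith
      · exact Or.inl hmm
      · rcases (by omega : m = 1 ∨ 2 ≤ m) with h' | h'
        · exact Or.inr h'
        · have : (p:ℤ) * 2 ≤ p * m := mul_le_mul_of_nonneg_left h' hp0'
          exfalso; linarith
    rcases hmle with rfl | rfl
    · exfalso; rw [mul_zero] at hm; linarith
    · right; left
      rw [mul_one] at hm
      have hfin : (p:ℤ) ≤ 3 * t := by linarith
      exact_mod_cast hfin

lemma rep_lemma (q N : ℕ) (hq : 1 ≤ q) (hN : 6^q + 1 ≤ N) :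
    ∃ a b : ℕ, a * 2^q + b * 3^q = N := by
  have cop23 : Nat.Coprime 2 3 := by norm_num
  have cop : Nat.Coprime (2^q) (3^q) := Nat.Coprime.pow q q cop23
  have h2 : 1 < 2^q := Nat.one_lt_two_pow (by omega)
  have h3 : 1 < 3^q := Nat.one_lt_pow (by omega) (by norm_num)
  have hfr := frobeniusNumber_pair cop h2 h3
  have hmem : N ∈ AddSubmonoid.closure ({2^q, 3^q} : Set ℕ) := by
    by_contra hc
    have hle := hfr.2 hc
    have h6 : 2^q * 3^q = 6^q := by rw [← mul_pow]; norm_num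
    omega
  rw [AddSubmonoid.mem_closure_pair] at hmem
  obtain ⟨a, b, hab⟩ := hmem
  exact ⟨a, b, by simpa [smul_eq_mul] using hab⟩

lemma final_nat {p q a b s t : ℕ} (hq : 1 ≤ q) (hp : 2 ≤ p)
    (hsum : a * 2^q + b * 3^q = p^q - 1) (ha : 4^q ≤ a) (hb : 3^q ≤ b)
    (hcase : (4 ≤ s ∧ 6 ≤ t) ∨ p ≤ 3*t ∨ p ≤ 4*s) :
    p^q ≤ a * s^q + b * t^q := by
  have hp1 : 2 ≤ p^q := le_trans hp (Nat.le_self_pow (by omega) p)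
  rcases hcase with ⟨hscase, htcase⟩ | hcase | hcase
  · have e4 : (4:ℕ)^q = 2^q * 2^q := by rw [← mul_pow]; norm_num
    have e6 : (6:ℕ)^q = 2^q * 3^q := by rw [← mul_pow]; norm_num
    have h1 : a * 4^q + b * 6^q ≤ a * s^q + b * t^q :=
      Nat.add_le_add (Nat.mul_le_mul_left a (Nat.pow_le_pow_left hscase q))
        (Nat.mul_le_mul_left b (Nat.pow_le_pow_left htcase q))
    have h2 : a * 4^q + b * 6^q = 2^q * (p^q - 1) := by
      rw [e4, e6, ← hsum]; ring
    have h2q : (2:ℕ) ≤ 2^q := Nat.one_lt_two_pow (by omega : q ≠ 0)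
    have h3 : 2 * (p^q - 1) ≤ 2^q * (p^q - 1) := mul_le_mul_left h2q _
    calc p^q ≤ 2 * (p^q - 1) := by omega
      _ ≤ 2^q * (p^q - 1) := h3
      _ = a * 4^q + b * 6^q := h2.symm
      _ ≤ a * s^q + b * t^q := h1
  · calc p^q ≤ (3*t)^q := Nat.pow_le_pow_left hcase q
      _ = 3^q * t^q := by rw [mul_pow]
      _ ≤ b * t^q := Nat.mul_le_mul_right _ hb
      _ ≤ a * s^q + b * t^q := Nat.le_add_left _ _
  · calc p^q ≤ (4*s)^q := Nat.pow_le_pow_left hcase q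
      _ = 4^q * s^q := by rw [mul_pow]
      _ ≤ a * s^q := Nat.mul_le_mul_right _ ha
      _ ≤ a * s^q + b * t^q := Nat.le_add_right _ _

lemma sum_addCases (a b : ℕ) (f : ℤ → ℝ) :
    ∑ i : Fin (a + b), f (Fin.addCases (motive := fun _ => ℤ) (fun _ => 2) (fun _ => 3) i)
      = a * f 2 + b * f 3 := by
  rw [Fin.sum_univ_add]
  simp [Finset.sum_const, nsmul_eq_mul]

/-- Existence of a short vector modulo a large prime: a vector `σ` with entries in `{2,3}`
whose `ℓ^q` norm modulo `p` to the `q`-th power is `p^q − 1`, and whose nontrivial scalar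
multiples `k·σ` (for `k ≢ 0, ±1 (mod p)`) are strictly longer modulo `p`. -/
theorem exists_short_vector_mod_prime (q : ℕ) (hq : 1 ≤ q) :
    ∃ P : ℕ, ∀ p : ℕ, P ≤ p → p.Prime →
      ∃ (n : ℕ) (σ : Fin (n - 1) → ℤ),
        (∀ i, σ i = 2 ∨ σ i = 3) ∧
        (∑ i, modAbs p ((σ i : ℤ) : ℝ) ^ q) = (p : ℝ) ^ q - 1 ∧
        ∀ k : ℤ, ¬ (p : ℤ) ∣ k → ¬ (p : ℤ) ∣ k - 1 → ¬ (p : ℤ) ∣ k + 1 →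
          (∑ i, modAbs p ((k * σ i : ℤ) : ℝ) ^ q) > (p : ℝ) ^ q - 1 := by
  refine ⟨8^q + 9^q + 6^q + 100, fun p hP hprime => ?_⟩
  have hp100 : 100 ≤ p := by
    have : 0 ≤ 8^q + 9^q + 6^q := Nat.zero_le _
    omega
  have hp0 : 0 < p := by omega
  have hppow : p ≤ p^q := Nat.le_self_pow (by omega) p
  have hpos6 : 0 < 6^q := by positivity
  have hpos8 : 0 < 8^q := by positivity
  have hpos9 : 0 < 9^q := by positivity
  have hpos2 : 0 < 2^q := by positivity
  have hpos3 : 0 < 3^q := by positivity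
  have hpos4 : 0 < 4^q := by positivity
  -- representation
  obtain ⟨a', b', hab⟩ := rep_lemma q (p^q - 1 - 8^q - 9^q) hq (by omega)
  set a := a' + 4^q with hadef
  set b := b' + 3^q with hbdef
  have hsum : a * 2^q + b * 3^q = p^q - 1 := by
    have e8 : (4:ℕ)^q * 2^q = 8^q := by rw [← mul_pow]; norm_num
    have e9 : (3:ℕ)^q * 3^q = 9^q := by rw [← mul_pow]; norm_num
    have h89 : 8^q + 9^q + 1 ≤ p^q := by omega
    calc a * 2^q + b * 3^q = (a' * 2^q + b' * 3^q) + (4^q * 2^q + 3^q * 3^q) := by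
          rw [hadef, hbdef]; ring
      _ = (p^q - 1 - 8^q - 9^q) + (8^q + 9^q) := by rw [hab, e8, e9]
      _ = p^q - 1 := by omega
  refine ⟨a + b + 1, Fin.addCases (motive := fun _ => ℤ) (fun _ => 2) (fun _ => 3), ?_, ?_, ?_⟩
  · intro i
    refine Fin.addCases (motive := fun i =>
      Fin.addCases (motive := fun _ => ℤ) (fun _ => 2) (fun _ => 3) i = 2 ∨
      Fin.addCases (motive := fun _ => ℤ) (fun _ => 2) (fun _ => 3) i = 3) ?_ ?_ i
    · intro j; left; simp
    · intro j; right; simp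
  · -- first sum
    have h2 : modNat p ((2:ℕ):ℤ) = 2 := modNat_small hp0 (by omega)
    have h3 : modNat p ((3:ℕ):ℤ) = 3 := modNat_small hp0 (by omega)
    rw [show (∑ i : Fin (a + b + 1 - 1),
        modAbs p ((Fin.addCases (motive := fun _ => ℤ) (fun _ => 2) (fun _ => 3) i : ℤ) : ℝ) ^ q)
      = ∑ i : Fin (a + b), (fun x : ℤ => modAbs p (x : ℝ) ^ q)
          (Fin.addCases (motive := fun _ => ℤ) (fun _ => 2) (fun _ => 3) i) from rfl]
    rw [sum_addCases a b (fun x : ℤ => modAbs p (x : ℝ) ^ q)]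
    have c2 : modAbs p ((2:ℤ) : ℝ) = (2:ℝ) := by
      have := modAbs_intCast hp0 ((2:ℕ):ℤ)
      rw [h2] at this
      simpa using this
    have c3 : modAbs p ((3:ℤ) : ℝ) = (3:ℝ) := by
      have := modAbs_intCast hp0 ((3:ℕ):ℤ)
      rw [h3] at this
      simpa using this
    rw [c2, c3]
    have : ((a * 2^q + b * 3^q : ℕ) : ℝ) = ((p^q - 1 : ℕ) : ℝ) := congrArg (fun x : ℕ => (x:ℝ)) hsum
    have hge1 : 1 ≤ p^q := by omega
    push_cast [Nat.cast_sub hge1] at this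
    push_cast
    linarith
  · intro k h0 h1 h2
    set sσ := modNat p (2*k) with hsdef
    set tσ := modNat p (3*k) with htdef
    rw [show (∑ i : Fin (a + b + 1 - 1),
        modAbs p ((k * Fin.addCases (motive := fun _ => ℤ) (fun _ => 2) (fun _ => 3) i : ℤ) : ℝ) ^ q)
      = ∑ i : Fin (a + b), (fun x : ℤ => modAbs p ((k * x : ℤ) : ℝ) ^ q)
          (Fin.addCases (motive := fun _ => ℤ) (fun _ => 2) (fun _ => 3) i) from rfl]
    rw [sum_addCases a b (fun x : ℤ => modAbs p ((k * x : ℤ) : ℝ) ^ q)]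
    have c2 : modAbs p ((k * 2 : ℤ) : ℝ) = (sσ : ℝ) := by
      rw [modAbs_intCast hp0 (k*2), hsdef, mul_comm]
    have c3 : modAbs p ((k * 3 : ℤ) : ℝ) = (tσ : ℝ) := by
      rw [modAbs_intCast hp0 (k*3), htdef, mul_comm]
    rw [c2, c3]
    have hkey := key_cases hp100 h0 h1 h2
    have hfin : p^q ≤ a * sσ^q + b * tσ^q :=
      final_nat hq (by omega) hsum (by omega) (by omega) (by rw [hsdef, htdef]; exact hkey)
    have hfin' : ((p:ℝ))^q ≤ (a:ℝ) * (sσ:ℝ)^q + (b:ℝ) * (tσ:ℝ)^q := by exact_mod_cast hfin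
    linarith
end

section
/- Let p = 13, q = 2, and σ ∈ ℤ^{27} be the vector with 15 entries equal to 2 and 12 entries equal to 3. Then ∑ᵢ |σᵢ|_{13}² = 13² − 1 = 168, and for every integer k with k ≢ 0, 1, −1 (mod 13), ∑ᵢ |k·σᵢ|_{13}² > 168, where |a|_p = min_{z∈ℤ} |a − pz|. -/
lemma bmod_bounds (a : ℤ) : -6 ≤ a.bmod 13 ∧ a.bmod 13 ≤ 6 := by
  have h := Int.emod_nonneg a (by norm_num : (13:ℤ) ≠ 0)
  have h2 := Int.emod_lt_of_pos a (by norm_num : (0:ℤ) < 13)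
  simp [Int.bmod]
  split <;> omega

lemma modAbs_int (a : ℤ) : modAbs 13 (a : ℝ) = ((a.bmod 13).natAbs : ℝ) := by
  have hdvd : (13:ℤ) ∣ (a - a.bmod 13) := by
    have h3 : a % 13 = a - 13 * (a / 13) := by omega
    simp only [Int.bmod]
    split <;> [exact ⟨a/13, by omega⟩; exact ⟨a/13 + 1, by omega⟩]
  obtain ⟨z, hz⟩ := hdvd
  have habs : ∀ b : ℤ, |((b:ℤ):ℝ)| = (b.natAbs : ℝ) := fun b => by
    rw [Nat.cast_natAbs, Int.cast_abs]
  unfold modAbs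
  apply le_antisymm
  · apply csInf_le ⟨0, by rintro x ⟨w, rfl⟩; positivity⟩
    refine ⟨z, ?_⟩
    show |(a:ℝ) - 13 * ((z:ℤ):ℝ)| = _
    have h4 : a - 13 * z = a.bmod 13 := by omega
    rw [show ((a:ℝ) - 13 * ((z:ℤ):ℝ)) = ((a - 13*z : ℤ) : ℝ) by push_cast; ring, h4, habs]
  · apply le_csInf (Set.range_nonempty _)
    rintro x ⟨w, rfl⟩
    show ((a.bmod 13).natAbs : ℝ) ≤ |(a:ℝ) - 13 * ((w:ℤ):ℝ)|
    rw [show ((a:ℝ) - 13 * ((w:ℤ):ℝ)) = ((a - 13*w : ℤ) : ℝ) by push_cast; ring, habs]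
    have hb := bmod_bounds a
    have key : (a.bmod 13).natAbs ≤ (a - 13*w).natAbs := by
      rcases eq_or_ne w z with rfl | hne
      · omega
      · have h5 : z - w ≠ 0 := sub_ne_zero.mpr (Ne.symm hne)
        omega
    exact_mod_cast key

lemma bmod_congr (a b : ℤ) (h : a % 13 = b % 13) : a.bmod 13 = b.bmod 13 := by
  simp only [Int.bmod]
  norm_num [h]

/-- The vector `σ = (2^{15}, 3^{12})` is a short vector modulo `13` for the
Euclidean norm: `∑ |σᵢ|₁₃² = 168 = 13² − 1`, and every multiple `k·σ` with
`k ≢ 0, ±1 (mod 13)` is strictly longer modulo `13`. -/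
theorem short_vector_mod_thirteen
    (σ : Fin 27 → ℤ) (hσ : ∀ i, σ i = if (i : ℕ) < 15 then 2 else 3) :
    (∑ i, modAbs 13 ((σ i : ℤ) : ℝ) ^ 2) = 168 ∧
    ∀ k : ℤ, ¬ (13 : ℤ) ∣ k → ¬ (13 : ℤ) ∣ k - 1 → ¬ (13 : ℤ) ∣ k + 1 →
      (∑ i, modAbs 13 ((k * σ i : ℤ) : ℝ) ^ 2) > 168 := by
  constructor
  · have h1 : ∀ i : Fin 27, modAbs 13 ((σ i : ℤ) : ℝ) ^ 2 = if (i:ℕ) < 15 then (4:ℝ) else 9 := by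
      intro i
      rw [hσ i]
      split <;> rw [modAbs_int] <;>
        norm_num [show ((2:ℤ).bmod 13) = 2 from by decide, show ((3:ℤ).bmod 13) = 3 from by decide]
    rw [Finset.sum_congr rfl (fun i _ => h1 i)]
    norm_num [Fin.sum_univ_succ]
  · intro k h0 h1 h2
    set r := k % 13 with hrdef
    have hA : (k*2).bmod 13 = (r*2).bmod 13 := bmod_congr _ _ (by omega)
    have hB : (k*3).bmod 13 = (r*3).bmod 13 := bmod_congr _ _ (by omega)
    have h1' : ∀ i : Fin 27, modAbs 13 ((k * σ i : ℤ) : ℝ) ^ 2 =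
        if (i:ℕ) < 15 then ((((r*2).bmod 13).natAbs : ℝ))^2 else ((((r*3).bmod 13).natAbs : ℝ))^2 := by
      intro i
      rw [hσ i]
      split <;> rw [modAbs_int]
      · rw [hA]
      · rw [hB]
    rw [Finset.sum_congr rfl (fun i _ => h1' i)]
    have key : 168 < 15 * ((r*2).bmod 13).natAbs^2 + 12 * ((r*3).bmod 13).natAbs^2 := by
      have hr : 2 ≤ r ∧ r ≤ 11 := by omega
      obtain ⟨hl, hu⟩ := hr
      interval_cases r <;> decide
    have : (168:ℝ) < 15 * (((r*2).bmod 13).natAbs : ℝ)^2 + 12 * (((r*3).bmod 13).natAbs : ℝ)^2 := by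
      exact_mod_cast key
    calc (168:ℝ) < _ := this
      _ = ∑ i : Fin 27, (if (i:ℕ) < 15 then ((((r*2).bmod 13).natAbs : ℝ))^2 else ((((r*3).bmod 13).natAbs : ℝ))^2) := by
          norm_num [Fin.sum_univ_succ]; ring
end

section
/- Let q ≥ 1 and n ≥ 2^q + 1, and let L ⊂ ℝⁿ be the lattice L = ℤⁿ + ℤ·(1/2,...,1/2). Then λᵢ^{(q)}(L) = 1 for all 1 ≤ i ≤ n, but L has no basis v₁,...,vₙ with ‖vᵢ‖_q = 1 for all i; in particular L is not ℓ^q-standard. -/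
/-- The `ℓ^q` norm of a vector in `ℝⁿ`. -/
noncomputable def lqNorm (q : ℕ) {n : ℕ} (x : Fin n → ℝ) : ℝ :=
  (∑ i, |x i| ^ q) ^ ((1 : ℝ) / q)

/-- The `i`-th successive minimum of a lattice `L ⊂ ℝⁿ` in the `ℓ^q` norm. -/
noncomputable def succMin (q : ℕ) {n : ℕ} (L : Submodule ℤ (Fin n → ℝ)) (i : ℕ) : ℝ :=
  sInf {r : ℝ | 0 < r ∧ ∃ v : Fin i → (Fin n → ℝ),
    (∀ j, v j ∈ L) ∧ LinearIndependent ℝ v ∧ ∀ j, lqNorm q (v j) ≤ r}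

/-- Any element of the lattice is integer-valued or half-integer-valued. -/
lemma mem_lattice_cases {n : ℕ} {x : Fin n → ℝ}
    (hx : x ∈ Submodule.span ℤ
      ((Set.range fun i : Fin n => Pi.single i (1 : ℝ)) ∪ {fun _ => (1 : ℝ) / 2})) :
    (∀ i, ∃ m : ℤ, x i = m) ∨ (∀ i, ∃ m : ℤ, x i = m + 1 / 2) := by
  induction hx using Submodule.span_induction with
  | mem y hy =>
    rcases hy with ⟨i, rfl⟩ | hy
    · left
      intro j
      by_cases h : i = j
      · subst h; exact ⟨1, by simp⟩
      · exact ⟨0, by simp [Pi.single_apply, h]⟩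
    · right
      intro j
      exact ⟨0, by simp [Set.eq_of_mem_singleton hy]⟩
  | zero => exact Or.inl fun i => ⟨0, by simp⟩
  | add y z _ _ hy hz =>
    rcases hy with hy | hy <;> rcases hz with hz | hz
    · left; intro i
      obtain ⟨a, ha⟩ := hy i; obtain ⟨b, hb⟩ := hz i
      exact ⟨a + b, by push_cast [Pi.add_apply, ha, hb]; ring⟩
    · right; intro i
      obtain ⟨a, ha⟩ := hy i; obtain ⟨b, hb⟩ := hz i
      exact ⟨a + b, by push_cast [Pi.add_apply, ha, hb]; ring⟩
    · right; intro i
      obtain ⟨a, ha⟩ := hy i; obtain ⟨b, hb⟩ := hz i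
      exact ⟨a + b, by push_cast [Pi.add_apply, ha, hb]; ring⟩
    · left; intro i
      obtain ⟨a, ha⟩ := hy i; obtain ⟨b, hb⟩ := hz i
      exact ⟨a + b + 1, by push_cast [Pi.add_apply, ha, hb]; ring⟩
  | smul a y _ hy =>
    rcases hy with hy | hy
    · left; intro i
      obtain ⟨m, hm⟩ := hy i
      exact ⟨a * m, by push_cast [Pi.smul_apply, hm, zsmul_eq_mul]; ring⟩
    · rcases Int.even_or_odd a with ⟨k, hk⟩ | ⟨k, hk⟩
      · left; intro i
        obtain ⟨m, hm⟩ := hy i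
        refine ⟨a * m + k, ?_⟩
        rw [Pi.smul_apply, hm, hk, zsmul_eq_mul]
        push_cast; ring
      · right; intro i
        obtain ⟨m, hm⟩ := hy i
        refine ⟨a * m + k, ?_⟩
        rw [Pi.smul_apply, hm, hk, zsmul_eq_mul]
        push_cast; ring

lemma lqNorm_single {q n : ℕ} (hq : 1 ≤ q) (i : Fin n) :
    lqNorm q (Pi.single i (1 : ℝ)) = 1 := by
  have : (∑ j, |Pi.single i (1 : ℝ) j| ^ q) = (1 : ℝ) := by
    rw [Finset.sum_eq_single i]
    · simp
    · intro j _ hj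
      rw [Pi.single_apply, if_neg hj]
      simp [zero_pow (by omega : q ≠ 0)]
    · simp
  rw [lqNorm, this, Real.one_rpow]

lemma one_le_lqNorm_int {q n : ℕ} (hq : 1 ≤ q) {x : Fin n → ℝ}
    (hx : ∀ i, ∃ m : ℤ, x i = m) (hne : x ≠ 0) : 1 ≤ lqNorm q x := by
  obtain ⟨i, hi⟩ : ∃ i, x i ≠ 0 := by
    by_contra h
    push_neg at h
    exact hne (funext h)
  obtain ⟨m, hm⟩ := hx i
  have hm0 : m ≠ 0 := by rintro rfl; simp [hm] at hi
  have h1 : (1 : ℝ) ≤ |x i| ^ q := by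
    have : (1 : ℝ) ≤ |x i| := by
      rw [hm, ← Int.cast_abs]
      exact_mod_cast Int.one_le_abs hm0
    exact one_le_pow₀ this
  have hsum : (1 : ℝ) ≤ ∑ j, |x j| ^ q := by
    calc (1 : ℝ) ≤ |x i| ^ q := h1
    _ ≤ ∑ j, |x j| ^ q :=
      Finset.single_le_sum (f := fun j => |x j| ^ q) (fun j _ => by positivity)
        (Finset.mem_univ i)
  calc (1 : ℝ) = 1 ^ ((1 : ℝ) / q) := (Real.one_rpow _).symm
  _ ≤ (∑ j, |x j| ^ q) ^ ((1 : ℝ) / q) :=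
      Real.rpow_le_rpow zero_le_one hsum (by positivity)

lemma one_lt_lqNorm_half {q n : ℕ} (hq : 1 ≤ q) (hn : 2 ^ q + 1 ≤ n) {x : Fin n → ℝ}
    (hx : ∀ i, ∃ m : ℤ, x i = m + 1 / 2) : 1 < lqNorm q x := by
  have key : ∀ i, ((1 : ℝ) / 2) ^ q ≤ |x i| ^ q := by
    intro i
    obtain ⟨m, hm⟩ := hx i
    refine pow_le_pow_left₀ (by norm_num) ?_ q
    rw [hm]
    rcases le_or_gt 0 (m : ℝ) with h | h
    · rw [abs_of_nonneg (by linarith)]; linarith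
    · have hm0 : m < 0 := by exact_mod_cast h
      have : (m : ℝ) ≤ -1 := by exact_mod_cast (by omega : m ≤ -1)
      rw [abs_of_nonpos (by linarith)]; linarith
  have hsum : (1 : ℝ) < ∑ j, |x j| ^ q := by
    have h1 : (n : ℝ) * ((1 : ℝ) / 2) ^ q ≤ ∑ j, |x j| ^ q := by
      calc (n : ℝ) * ((1 : ℝ) / 2) ^ q = ∑ _j : Fin n, ((1 : ℝ) / 2) ^ q := by
            simp [Finset.sum_const, mul_comm]
      _ ≤ ∑ j, |x j| ^ q := Finset.sum_le_sum fun j _ => key j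
    have h2 : (1 : ℝ) < (n : ℝ) * ((1 : ℝ) / 2) ^ q := by
      have hn' : (2 : ℝ) ^ q + 1 ≤ (n : ℝ) := by exact_mod_cast hn
      have hpos : (0 : ℝ) < 2 ^ q := by positivity
      rw [div_pow, one_pow, mul_one_div, lt_div_iff₀ hpos, one_mul]
      linarith
    linarith
  calc (1 : ℝ) = 1 ^ ((1 : ℝ) / q) := (Real.one_rpow _).symm
  _ < (∑ j, |x j| ^ q) ^ ((1 : ℝ) / q) :=
      Real.rpow_lt_rpow zero_le_one hsum (by positivity)

/-- For `q ≥ 1` and `n ≥ 2^q + 1`, the lattice `L = ℤⁿ + ℤ·(1/2,…,1/2)` has all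
successive minima equal to `1`, but no basis whose vectors all have `ℓ^q` norm `1`;
in particular `L` is not `ℓ^q`-standard. -/
theorem non_standard_example (q n : ℕ) (hq : 1 ≤ q) (hn : 2 ^ q + 1 ≤ n)
    (L : Submodule ℤ (Fin n → ℝ))
    (hL : L = Submodule.span ℤ
      ((Set.range fun i : Fin n => Pi.single i (1 : ℝ)) ∪ {fun _ => (1 : ℝ) / 2})) :
    (∀ i : ℕ, 1 ≤ i → i ≤ n → succMin q L i = 1) ∧
    ¬ ∃ v : Fin n → (Fin n → ℝ),
        LinearIndependent ℝ v ∧ Submodule.span ℤ (Set.range v) = L ∧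
        ∀ i, lqNorm q (v i) = 1 := by
  have hmin : ∀ x ∈ L, x ≠ 0 → 1 ≤ lqNorm q x := by
    intro x hx hne
    rcases mem_lattice_cases (hL ▸ hx) with h | h
    · exact one_le_lqNorm_int hq h hne
    · exact le_of_lt (one_lt_lqNorm_half hq hn h)
  constructor
  · intro i h1i hin
    have hlb : ∀ r ∈ {r : ℝ | 0 < r ∧ ∃ v : Fin i → (Fin n → ℝ),
        (∀ j, v j ∈ L) ∧ LinearIndependent ℝ v ∧ ∀ j, lqNorm q (v j) ≤ r}, 1 ≤ r := by
      rintro r ⟨hr, v, hvL, hli, hvr⟩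
      have j0 : Fin i := ⟨0, h1i⟩
      have hne : v j0 ≠ 0 := hli.ne_zero j0
      exact le_trans (hmin _ (hvL j0) hne) (hvr j0)
    have hmem : (1 : ℝ) ∈ {r : ℝ | 0 < r ∧ ∃ v : Fin i → (Fin n → ℝ),
        (∀ j, v j ∈ L) ∧ LinearIndependent ℝ v ∧ ∀ j, lqNorm q (v j) ≤ r} := by
      refine ⟨one_pos, fun j => Pi.single (Fin.castLE hin j) 1, ?_, ?_, ?_⟩
      · intro j
        rw [hL]
        exact Submodule.subset_span (Or.inl ⟨Fin.castLE hin j, rfl⟩)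
      · have := (Pi.basisFun ℝ (Fin n)).linearIndependent
        have h2 := this.comp (Fin.castLE hin) (Fin.castLE_injective hin)
        convert h2 using 1
        funext j
        simp [Pi.basisFun_apply, Function.comp]
      · intro j
        exact le_of_eq (lqNorm_single hq _)
    exact le_antisymm (csInf_le ⟨1, hlb⟩ hmem) (le_csInf ⟨1, hmem⟩ hlb)
  · rintro ⟨v, hli, hspan, hnorm⟩
    -- each v i is integer-valued
    have hint : ∀ i, ∀ j, ∃ m : ℤ, v i j = m := by
      intro i
      have hvi : v i ∈ L := by
        rw [← hspan]
        exact Submodule.subset_span ⟨i, rfl⟩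
      rcases mem_lattice_cases (hL ▸ hvi) with h | h
      · exact h
      · exact absurd (hnorm i) (by have := one_lt_lqNorm_half hq hn h; linarith)
    -- everything in the span is integer-valued
    have hspanint : ∀ x ∈ Submodule.span ℤ (Set.range v), ∀ j, ∃ m : ℤ, x j = m := by
      intro x hx
      induction hx using Submodule.span_induction with
      | mem y hy =>
        obtain ⟨i, rfl⟩ := hy
        exact hint i
      | zero => exact fun j => ⟨0, by simp⟩
      | add y z _ _ hy hz =>
        intro j
        obtain ⟨a, ha⟩ := hy j; obtain ⟨b, hb⟩ := hz j
        exact ⟨a + b, by push_cast [Pi.add_apply, ha, hb]; ring⟩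
      | smul a y _ hy =>
        intro j
        obtain ⟨m, hm⟩ := hy j
        exact ⟨a * m, by push_cast [Pi.smul_apply, hm, zsmul_eq_mul]; ring⟩
    have hhalf : (fun _ => (1 : ℝ) / 2) ∈ Submodule.span ℤ (Set.range v) := by
      rw [hspan, hL]
      exact Submodule.subset_span (Or.inr rfl)
    have h0 : (0 : ℕ) < n := lt_of_lt_of_le (by positivity) hn
    obtain ⟨m, hm⟩ := hspanint _ hhalf ⟨0, h0⟩
    have : (2 : ℝ) * m = 1 := by rw [← hm]; norm_num
    have : (2 * m : ℤ) = 1 := by exact_mod_cast this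
    omega
end

section
/- Let p ≥ 7 be a prime, q ≥ 1, n ∈ ℕ, and let u = (1, σ) ∈ ℤⁿ where σ ∈ {2,3}^{n−1} satisfies ∑ᵢ σᵢ^q = p^q − 1 and, for all integers k ≢ 0, ±1 (mod p), ∑ᵢ |k·σᵢ|_p^q + |k|_p^q > p^q − 1 + 1 = p^q. Let L₊ ⊂ ℝⁿ be the lattice generated by p·e₁, ..., p·eₙ and u. Then every nonzero vector of L₊ has ℓ^q norm at least p, and the only vectors of ℓ^q norm exactly p in L₊ are ±p·e₁, ..., ±p·eₙ, and ±u. -/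
lemma modAbs_nonneg (m x : ℝ) : 0 ≤ modAbs m x :=
  le_csInf (Set.range_nonempty _) (by rintro b ⟨z, rfl⟩; exact abs_nonneg _)

lemma modAbs_le (m x : ℝ) (z : ℤ) : modAbs m x ≤ |x - m * z| :=
  csInf_le ⟨0, by rintro b ⟨w, rfl⟩; exact abs_nonneg _⟩ ⟨z, rfl⟩

section lqNorm

variable {q n : ℕ} (hq : q ≠ 0) {c : ℝ} (hc : 0 ≤ c) (x : Fin n → ℝ)
include hq hc

lemma le_lqNorm_iff : c ≤ lqNorm q x ↔ c ^ q ≤ ∑ i, |x i| ^ q := by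
  rw [lqNorm, one_div, Real.le_rpow_inv_iff_of_pos hc (by positivity) (by positivity),
    Real.rpow_natCast]

lemma lqNorm_eq_iff : lqNorm q x = c ↔ ∑ i, |x i| ^ q = c ^ q := by
  rw [lqNorm, one_div, Real.rpow_inv_eq (by positivity) hc (by exact_mod_cast hq),
    Real.rpow_natCast]

end lqNorm

lemma Int.abs_lt_abs_add_mul {a m w : ℤ} (ha : 2 * |a| < m) (hw : w ≠ 0) : |a| < |a + m * w| := by
  have hm : 0 < m := by linarith [abs_nonneg a]
  have hmw : m ≤ |m * w| := by
    rw [abs_mul, abs_of_pos hm]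
    exact le_mul_of_one_le_right hm.le (Int.one_le_abs hw)
  have := abs_sub_abs_le_abs_sub (m * w) (-a)
  rw [abs_neg, sub_neg_eq_add, add_comm] at this
  linarith

section IntVectors

variable {ι : Type*} [Fintype ι] {q : ℕ}

lemma sum_abs_pow_lt_sum_abs_pow_add_smul (hq : q ≠ 0) {m : ℤ} {a : ι → ℤ}
    (ha : ∀ i, 2 * |a i| < m) {w : ι → ℤ} (hw : w ≠ 0) :
    ∑ i, |a i| ^ q < ∑ i, |(a + m • w) i| ^ q := by
  obtain ⟨i, hi⟩ := Function.ne_iff.1 hw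
  have hle : ∀ j, |a j| ≤ |a j + m * w j| := fun j => by
    rcases eq_or_ne (w j) 0 with h | h
    · simp [h]
    · exact (Int.abs_lt_abs_add_mul (ha j) h).le
  refine Finset.sum_lt_sum (fun j _ => pow_le_pow_left₀ (abs_nonneg _) (hle j) q)
    ⟨i, Finset.mem_univ i, pow_lt_pow_left₀ (Int.abs_lt_abs_add_mul (ha i) hi) (abs_nonneg _) hq⟩

variable [DecidableEq ι]

lemma eq_single_or_eq_neg_single_of_sum_abs_pow_le_one (hq : q ≠ 0) {c : ι → ℤ} (hc : c ≠ 0)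
    (h : ∑ i, |c i| ^ q ≤ 1) : ∃ i, c = Pi.single i 1 ∨ c = -Pi.single i 1 := by
  obtain ⟨i, hi⟩ := Function.ne_iff.1 hc
  have hci : 1 ≤ |c i| ^ q := one_le_pow₀ (Int.one_le_abs hi)
  rw [← Finset.add_sum_erase _ _ (Finset.mem_univ i)] at h
  have hnn : 0 ≤ ∑ j ∈ Finset.univ.erase i, |c j| ^ q := by positivity
  have hrest : ∀ j ∈ Finset.univ.erase i, |c j| ^ q = 0 :=
    (Finset.sum_eq_zero_iff_of_nonneg fun j _ => by positivity).1 (by linarith)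
  have hc_eq : c = Pi.single i (c i) := funext fun j => by
    rcases eq_or_ne j i with rfl | hji
    · simp
    · simpa [hji, hq] using hrest j (Finset.mem_erase.2 ⟨hji, Finset.mem_univ j⟩)
  have : |c i| = 1 := le_antisymm
    ((pow_le_one_iff_of_nonneg (abs_nonneg _) hq).1 (by linarith)) (Int.one_le_abs hi)
  refine ⟨i, ?_⟩
  rcases abs_eq (zero_le_one' ℤ) |>.1 this with h1 | h1
  · exact .inl (h1 ▸ hc_eq)
  · exact .inr (by rw [hc_eq, h1, Pi.single_neg])

end IntVectors

def IsSignedGenerator {ι R : Type*} [DecidableEq ι] [Ring R] (p : R) (ν x : ι → R) : Prop :=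
  (∃ i, x = p • (Pi.single i 1 : ι → R) ∨ x = -(p • (Pi.single i 1 : ι → R))) ∨ x = ν ∨ x = -ν

namespace IsSignedGenerator

variable {ι R S : Type*} [DecidableEq ι] {p : R} {ν x : ι → R}

lemma map [Ring R] [Ring S] (f : R →+* S) (h : IsSignedGenerator p ν x) :
    IsSignedGenerator (f p) (f ∘ ν) (f ∘ x) := by
  have hsingle : ∀ i, f ∘ (p • (Pi.single i 1 : ι → R)) = f p • Pi.single i 1 := fun i => by
    funext j; rcases eq_or_ne j i with rfl | hji <;> simp [*]
  rcases h with ⟨i, rfl | rfl⟩ | rfl | rfl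
  · exact .inl ⟨i, .inl (hsingle i)⟩
  · exact .inl ⟨i, .inr (by rw [← hsingle]; funext j; simp)⟩
  · exact .inr (.inl rfl)
  · exact .inr (.inr (by funext j; simp))

lemma sum_abs_pow [Fintype ι] [Ring R] [LinearOrder R] [IsStrictOrderedRing R] {q : ℕ}
    (hq : q ≠ 0) (hp : 0 ≤ p) (hν : ∑ i, |ν i| ^ q = p ^ q) (h : IsSignedGenerator p ν x) :
    ∑ i, |x i| ^ q = p ^ q := by
  have hsingle : ∀ i, ∑ j, |(p • (Pi.single i 1 : ι → R)) j| ^ q = p ^ q := fun i => by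
    rw [Finset.sum_eq_single i (fun j _ hji => by simp [hji, hq]) (by simp)]
    simp [abs_of_nonneg hp]
  rcases h with ⟨i, rfl | rfl⟩ | rfl | rfl
  · exact hsingle i
  · simpa using hsingle i
  · exact hν
  · simpa using hν

end IsSignedGenerator

lemma exists_eq_intCast_comp_of_mem_span {ι : Type*} [DecidableEq ι] {p : ℕ} {ν : ι → ℤ}
    {x : ι → ℝ} (hx : x ∈ Submodule.span ℤ
      (Set.range (fun i => (p : ℝ) • (Pi.single i 1 : ι → ℝ)) ∪ {Int.cast ∘ ν})) :
    ∃ (k : ℤ) (z : ι → ℤ), x = Int.cast ∘ (k • ν + (p : ℤ) • z) := by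
  induction hx using Submodule.span_induction with
  | mem y hy =>
    rcases hy with ⟨i, rfl⟩ | rfl
    · exact ⟨0, Pi.single i 1, by funext j; rcases eq_or_ne j i with rfl | h <;> simp [*]⟩
    · exact ⟨1, 0, by simp⟩
  | zero => exact ⟨0, 0, by funext j; simp⟩
  | add a b _ _ ha hb =>
    obtain ⟨k₁, z₁, rfl⟩ := ha
    obtain ⟨k₂, z₂, rfl⟩ := hb
    exact ⟨k₁ + k₂, z₁ + z₂, by funext j; simp; ring⟩
  | smul c a _ ha =>
    obtain ⟨k, z, rfl⟩ := ha
    exact ⟨c * k, c • z, by funext j; simp; ring⟩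

section ShortVectors

variable {ι : Type*} [Fintype ι] [DecidableEq ι] {q : ℕ}

lemma pow_lt_sum_abs_pow_smul_or_isSignedGenerator (hq : q ≠ 0) {p : ℤ} (hp : 0 < p)
    (ν : ι → ℤ) {c : ι → ℤ} (hc : c ≠ 0) :
    p ^ q < ∑ i, |(p • c) i| ^ q ∨ IsSignedGenerator p ν (p • c) := by
  by_cases hS : ∑ i, |c i| ^ q ≤ 1
  · obtain ⟨i, h | h⟩ := eq_single_or_eq_neg_single_of_sum_abs_pow_le_one hq hc hS
    · exact .inr (.inl ⟨i, .inl (by rw [h])⟩)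
    · exact .inr (.inl ⟨i, .inr (by rw [h, smul_neg])⟩)
  · left
    have hsum : ∑ i, |(p • c) i| ^ q = p ^ q * ∑ i, |c i| ^ q := by
      simp [abs_mul, mul_pow, Finset.mul_sum, abs_of_pos hp]
    rw [hsum]
    exact lt_mul_of_one_lt_right (by positivity) (not_le.1 hS)

lemma pow_lt_sum_abs_pow_or_isSignedGenerator_of_isUnit (hq : q ≠ 0) {p : ℤ} {ν : ι → ℤ}
    (hν : ∀ i, 2 * |ν i| < p) (hνq : ∑ i, |ν i| ^ q = p ^ q) {e : ℤ} (he : IsUnit e)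
    (w : ι → ℤ) :
    p ^ q < ∑ i, |(e • ν + p • w) i| ^ q ∨ IsSignedGenerator p ν (e • ν + p • w) := by
  have habs : ∀ i, |(e • ν) i| = |ν i| := fun i => by
    simp [abs_mul, Int.isUnit_iff_abs_eq.1 he]
  by_cases hw : w = 0
  · right; right
    rcases Int.isUnit_iff.1 he with rfl | rfl <;> simp [hw]
  · left
    have h := sum_abs_pow_lt_sum_abs_pow_add_smul hq (fun i => habs i ▸ hν i) hw
    simpa only [habs, hνq] using h

theorem pow_lt_sum_abs_pow_or_isSignedGenerator {p : ℕ} (hq : q ≠ 0) {ν : ι → ℤ}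
    (hν : ∀ i, 2 * |ν i| < p) (hνq : ∑ i, |ν i| ^ q = (p : ℤ) ^ q)
    (hk : ∀ k : ℤ, ¬ (p : ℤ) ∣ k → ¬ (p : ℤ) ∣ k - 1 → ¬ (p : ℤ) ∣ k + 1 →
      (p : ℝ) ^ q < ∑ i, modAbs p ((k * ν i : ℤ) : ℝ) ^ q)
    (k : ℤ) (z : ι → ℤ) (hy : k • ν + (p : ℤ) • z ≠ 0) :
    (p : ℤ) ^ q < ∑ i, |(k • ν + (p : ℤ) • z) i| ^ q ∨
      IsSignedGenerator (p : ℤ) ν (k • ν + (p : ℤ) • z) := by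
  by_cases h0 : (p : ℤ) ∣ k
  · obtain ⟨m, rfl⟩ := h0
    obtain ⟨i, -⟩ := Function.ne_iff.1 hy
    have hp : (0 : ℤ) < p := by linarith [hν i, abs_nonneg (ν i)]
    rw [show ((p : ℤ) * m) • ν + (p : ℤ) • z = (p : ℤ) • (m • ν + z) by module] at hy ⊢
    exact pow_lt_sum_abs_pow_smul_or_isSignedGenerator hq hp ν (right_ne_zero_of_smul hy)
  by_cases h1 : (p : ℤ) ∣ k - 1
  · obtain ⟨m, hm⟩ := h1
    rw [show k • ν + (p : ℤ) • z = (1 : ℤ) • ν + (p : ℤ) • (m • ν + z) by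
      rw [show k = 1 + p * m by linarith]; module]
    exact pow_lt_sum_abs_pow_or_isSignedGenerator_of_isUnit hq hν hνq isUnit_one _
  by_cases h2 : (p : ℤ) ∣ k + 1
  · obtain ⟨m, hm⟩ := h2
    rw [show k • ν + (p : ℤ) • z = (-1 : ℤ) • ν + (p : ℤ) • (m • ν + z) by
      rw [show k = -1 + p * m by linarith]; module]
    exact pow_lt_sum_abs_pow_or_isSignedGenerator_of_isUnit hq hν hνq isUnit_one.neg _
  left
  have hle : ∑ i, modAbs p ((k * ν i : ℤ) : ℝ) ^ q ≤
      ∑ i, |(((k • ν + (p : ℤ) • z) i : ℤ) : ℝ)| ^ q :=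
    Finset.sum_le_sum fun i _ => pow_le_pow_left₀ (modAbs_nonneg _ _)
      (by simpa [sub_eq_add_neg] using modAbs_le p (k * ν i : ℤ) (-z i)) q
  exact_mod_cast (hk k h0 h1 h2).trans_le hle

theorem eq_zero_or_pow_lt_sum_abs_pow_or_isSignedGenerator_of_mem_span {p : ℕ} (hq : q ≠ 0)
    {ν : ι → ℤ} (hν : ∀ i, 2 * |ν i| < p) (hνq : ∑ i, |ν i| ^ q = (p : ℤ) ^ q)
    (hk : ∀ k : ℤ, ¬ (p : ℤ) ∣ k → ¬ (p : ℤ) ∣ k - 1 → ¬ (p : ℤ) ∣ k + 1 →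
      (p : ℝ) ^ q < ∑ i, modAbs p ((k * ν i : ℤ) : ℝ) ^ q)
    {x : ι → ℝ} (hx : x ∈ Submodule.span ℤ
      (Set.range (fun i => (p : ℝ) • (Pi.single i 1 : ι → ℝ)) ∪ {Int.cast ∘ ν})) :
    x = 0 ∨ (p : ℝ) ^ q < ∑ i, |x i| ^ q ∨ IsSignedGenerator (p : ℝ) (Int.cast ∘ ν) x := by
  obtain ⟨k, z, rfl⟩ := exists_eq_intCast_comp_of_mem_span hx
  by_cases hy : k • ν + (p : ℤ) • z = 0
  · left; rw [hy]; funext i; simp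
  right
  rcases pow_lt_sum_abs_pow_or_isSignedGenerator hq hν hνq hk k z hy with h | h
  · left; simp only [Function.comp_apply]; exact_mod_cast h
  · right; simpa using h.map (Int.castRingHom ℝ)

end ShortVectors

theorem lattice_plus_shortest_vectors_general (p q n : ℕ) (hp7 : 7 ≤ p)
    (hq : 1 ≤ q) (σ : Fin n → ℤ) (hσ : ∀ i, σ i = 2 ∨ σ i = 3)
    (hsum : ∑ i, (σ i) ^ q = (p : ℤ) ^ q - 1)
    (hk : ∀ k : ℤ, ¬ (p : ℤ) ∣ k → ¬ (p : ℤ) ∣ k - 1 → ¬ (p : ℤ) ∣ k + 1 →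
      (∑ i, modAbs p ((k * σ i : ℤ) : ℝ) ^ q) + modAbs p (k : ℝ) ^ q > (p : ℝ) ^ q) :
    ∀ u : Fin (n + 1) → ℝ, u = Fin.cons 1 (fun i => (σ i : ℝ)) →
    ∀ L : Submodule ℤ (Fin (n + 1) → ℝ),
      L = Submodule.span ℤ
        ((Set.range fun i : Fin (n + 1) => (p : ℝ) • (Pi.single i 1 : Fin (n + 1) → ℝ)) ∪ {u}) →
      (∀ x ∈ L, x ≠ 0 → (p : ℝ) ≤ lqNorm q x) ∧
      (∀ x ∈ L, (lqNorm q x = p ↔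
        (∃ i : Fin (n + 1),
          x = (p : ℝ) • (Pi.single i 1 : Fin (n + 1) → ℝ) ∨ x = -((p : ℝ) • (Pi.single i 1 : Fin (n + 1) → ℝ))) ∨
        x = u ∨ x = -u)) := by
  rintro u hu L rfl
  set ν : Fin (n + 1) → ℤ := Fin.cons 1 σ
  obtain rfl : u = Int.cast ∘ ν := by
    subst hu; funext i; refine Fin.cases ?_ (fun j => ?_) i <;> simp [ν]
  have hν : ∀ i, 2 * |ν i| < p :=
    Fin.cases (by simp [ν]; omega) fun i => by rcases hσ i with h | h <;> simp [ν, h] <;> omega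
  have hνq : ∑ i, |ν i| ^ q = (p : ℤ) ^ q := by
    have : ∀ i, |σ i| = σ i := fun i => abs_of_pos (by rcases hσ i with h | h <;> omega)
    simp [ν, Fin.sum_univ_succ, this, hsum]
  have hkν : ∀ k : ℤ, ¬ (p : ℤ) ∣ k → ¬ (p : ℤ) ∣ k - 1 → ¬ (p : ℤ) ∣ k + 1 →
      (p : ℝ) ^ q < ∑ i, modAbs p ((k * ν i : ℤ) : ℝ) ^ q := fun k h0 h1 h2 => by
    simpa [ν, Fin.sum_univ_succ, add_comm] using hk k h0 h1 h2
  have hq0 : q ≠ 0 := by omega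
  have hp : (0 : ℝ) < p := by positivity
  have huq : ∑ i, |(Int.cast ∘ ν) i| ^ q = (p : ℝ) ^ q := by
    simp only [Function.comp_apply]; exact_mod_cast hνq
  refine ⟨fun x hx hx0 => ?_, fun x hx => ?_⟩
  · rw [le_lqNorm_iff hq0 hp.le]
    rcases eq_zero_or_pow_lt_sum_abs_pow_or_isSignedGenerator_of_mem_span hq0 hν hνq hkν hx
      with h | h | h
    · exact (hx0 h).elim
    · exact h.le
    · exact (h.sum_abs_pow hq0 hp.le huq).ge
  · rw [lqNorm_eq_iff hq0 hp.le]
    refine ⟨fun hS => ?_, fun h => IsSignedGenerator.sum_abs_pow hq0 hp.le huq h⟩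
    rcases eq_zero_or_pow_lt_sum_abs_pow_or_isSignedGenerator_of_mem_span hq0 hν hνq hkν hx
      with rfl | h | h
    · simp [hq0, eq_comm, hp.ne'] at hS
    · exact absurd hS h.ne'
    · exact h

/-- In the lattice `L₊ = pℤⁿ + ℤ·u` with `u = (1, σ)`, `σ ∈ {2,3}^{n−1}`,
`∑ σᵢ^q = p^q − 1`, and all multiples `k·u` with `k ≢ 0, ±1 (mod p)` long modulo `p`,
every nonzero lattice vector has `ℓ^q` norm at least `p`, and the only vectors of
norm exactly `p` are `±p·eᵢ` and `±u`. -/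
theorem lattice_plus_shortest_vectors (p q n : ℕ) (hp : p.Prime) (hp7 : 7 ≤ p)
    (hq : 1 ≤ q) (σ : Fin n → ℤ) (hσ : ∀ i, σ i = 2 ∨ σ i = 3)
    (hsum : ∑ i, (σ i) ^ q = (p : ℤ) ^ q - 1)
    (hk : ∀ k : ℤ, ¬ (p : ℤ) ∣ k → ¬ (p : ℤ) ∣ k - 1 → ¬ (p : ℤ) ∣ k + 1 →
      (∑ i, modAbs p ((k * σ i : ℤ) : ℝ) ^ q) + modAbs p (k : ℝ) ^ q > (p : ℝ) ^ q) :
    ∀ u : Fin (n + 1) → ℝ, u = Fin.cons 1 (fun i => (σ i : ℝ)) →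
    ∀ L : Submodule ℤ (Fin (n + 1) → ℝ),
      L = Submodule.span ℤ
        ((Set.range fun i : Fin (n + 1) => (p : ℝ) • (Pi.single i 1 : Fin (n + 1) → ℝ)) ∪ {u}) →
      (∀ x ∈ L, x ≠ 0 → (p : ℝ) ≤ lqNorm q x) ∧
      (∀ x ∈ L, (lqNorm q x = p ↔
        (∃ i : Fin (n + 1),
          x = (p : ℝ) • (Pi.single i 1 : Fin (n + 1) → ℝ) ∨ x = -((p : ℝ) • (Pi.single i 1 : Fin (n + 1) → ℝ))) ∨
        x = u ∨ x = -u)) :=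
  lattice_plus_shortest_vectors_general p q n hp7 hq σ hσ hsum hk
end
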